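/- arXiv:2605.24766 — 7 statements merged into one kernel-verified Lean document; each statement's English description precedes it below -/
import Mathlib

section
/- Suppose there exists a dense subset Θ ⊆ X* such that for every ξ ∈ Θ with ‖ξ‖ < γ, x̄ is a global minimizer of y ↦ f(y) − ⟨ξ, y⟩. Then x̄ is a sharp minimizer of f with modulus γ, i.e., f(x) ≥ f(x̄) + γ‖x − x̄‖ for all x ∈ X. -/
open Filter Topology

/-!
Minimality of `xbar` for the tilt `f - ξ` says `f x ≥ f xbar + ξ (x - xbar)`. By Hahn–Banach,
for every `s < γ * ‖x - xbar‖` the functionals `ξ` with `‖ξ‖ < γ` and `s < ξ (x - xbar)` form a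
nonempty open set, which the dense set `Θ` meets; letting `s ↑ γ * ‖x - xbar‖` gives the bound.
-/

theorem EReal.add_coe_le_of_forall_lt {a b : EReal} {r : ℝ}
    (h : ∀ s : ℝ, s < r → a + s ≤ b) : a + r ≤ b := by
  refine EReal.add_le_of_forall_lt fun a' ha' t ht ↦ ?_
  obtain ⟨s, hts, hsr⟩ := EReal.lt_iff_exists_real_btwn.mp ht
  exact (add_le_add ha'.le hts.le).trans (h s (EReal.coe_lt_coe_iff.mp hsr))

theorem EReal.add_coe_sub_le_of_sub_le_sub {a b : EReal} {u v : ℝ}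
    (h : a - u ≤ b - v) : a + (v - u : ℝ) ≤ b := by
  calc a + (v - u : ℝ) = a - u + v := by
        induction a using EReal.rec with
        | bot => simp
        | coe a => norm_cast; ring
        | top => exact EReal.top_add_coe _
    _ ≤ b - v + v := add_le_add_left h _
    _ = b := EReal.sub_add_cancel

theorem Dense.exists_mem_norm_lt_lt_apply {X : Type*} [NormedAddCommGroup X] [NormedSpace ℝ X]
    {Θ : Set (StrongDual ℝ X)} (hΘ : Dense Θ) {γ s : ℝ} (hγ : 0 < γ) {x : X}
    (hs : s < γ * ‖x‖) : ∃ ξ ∈ Θ, ‖ξ‖ < γ ∧ s < ξ x := by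
  have hU : IsOpen ({ξ : StrongDual ℝ X | ‖ξ‖ < γ} ∩ {ξ | s < ξ x}) :=
    (isOpen_lt continuous_norm continuous_const).inter
      (isOpen_lt continuous_const (continuous_eval_const x))
  have hlim : Tendsto (· * ‖x‖) (𝓝[<] γ) (𝓝 (γ * ‖x‖)) :=
    ((continuous_mul_const ‖x‖).tendsto γ).mono_left nhdsWithin_le_nhds
  obtain ⟨t, hts, ht0, htγ⟩ :=
    ((hlim.eventually (eventually_gt_nhds hs)).and (Ioo_mem_nhdsLT hγ)).exists
  obtain ⟨g, hg, hgx⟩ := exists_dual_vector'' ℝ x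
  have htg : ‖t • g‖ < γ := calc
    ‖t • g‖ = t * ‖g‖ := by rw [norm_smul, Real.norm_of_nonneg ht0.le]
    _ ≤ t := mul_le_of_le_one_right ht0.le hg
    _ < γ := htγ
  obtain ⟨ξ, ⟨hξγ, hξs⟩, hξΘ⟩ :=
    hΘ.inter_open_nonempty _ hU ⟨t • g, htg, by simpa [hgx] using hts⟩
  exact ⟨ξ, hξΘ, hξγ, hξs⟩

theorem dense_tilt_min_implies_sharp_general
    {X : Type*} [NormedAddCommGroup X] [NormedSpace ℝ X]
    (f : X → EReal) (xbar : X)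
    (γ : ℝ) (hγ : 0 < γ)
    (Θ : Set (X →L[ℝ] ℝ)) (hΘ : Dense Θ)
    (hmin : ∀ ξ ∈ Θ, ‖ξ‖ < γ →
      ∀ y : X, f xbar - ((ξ xbar : ℝ) : EReal) ≤ f y - ((ξ y : ℝ) : EReal)) :
    ∀ x : X, f xbar + ((γ * ‖x - xbar‖ : ℝ) : EReal) ≤ f x := by
  intro x
  refine EReal.add_coe_le_of_forall_lt fun s hs ↦ ?_
  obtain ⟨ξ, hξΘ, hξγ, hξs⟩ := hΘ.exists_mem_norm_lt_lt_apply hγ hs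
  calc f xbar + s ≤ f xbar + (ξ x - ξ xbar : ℝ) := by
        gcongr
        simpa using hξs.le
    _ ≤ f x := EReal.add_coe_sub_le_of_sub_le_sub (hmin ξ hξΘ hξγ x)

/-- tilt invariance of minimality over a dense set of dual tilts
implies sharp minimality with modulus γ. -/
theorem dense_tilt_min_implies_sharp
    {X : Type*} [NormedAddCommGroup X] [NormedSpace ℝ X]
    (f : X → EReal) (hbot : ∀ x, f x ≠ ⊥) (xbar : X) (hdom : f xbar ≠ ⊤)
    (γ : ℝ) (hγ : 0 < γ)
    (Θ : Set (X →L[ℝ] ℝ)) (hΘ : Dense Θ)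
    (hmin : ∀ ξ ∈ Θ, ‖ξ‖ < γ →
      ∀ y : X, f xbar - ((ξ xbar : ℝ) : EReal) ≤ f y - ((ξ y : ℝ) : EReal)) :
    ∀ x : X, f xbar + ((γ * ‖x - xbar‖ : ℝ) : EReal) ≤ f x :=
  dense_tilt_min_implies_sharp_general f xbar γ hγ Θ hΘ hmin
end

section
/- The following are equivalent: (i) for every ξ ∈ X* with ‖ξ‖ < γ, x̄ is the unique global minimizer of y ↦ f(y) − ⟨ξ, y⟩; (ii) f(x) ≥ f(x̄) + γ‖x − x̄‖ for all x ∈ X. -/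
/-!
Tilting by `ξ` with `‖ξ‖ < γ` costs at most `‖ξ‖ ‖x - x̄‖`, so a `γ`-sharp minimizer stays a
`(γ - ‖ξ‖)`-sharp, hence unique, minimizer of `f - ξ`. Conversely, if `x̄` minimizes `f - ξ` then
`f x ≥ f x̄ + ξ (x - x̄)`; testing this against multiples `c • g` of a norming functional `g` of
`x - x̄` with `|c| < γ` gives `f x ≥ f x̄ + c ‖x - x̄‖`, and letting `c ↑ γ` gives sharpness.
-/

open Set

namespace EReal

theorem sub_coe_le_sub_coe_iff {a b : EReal} {r s : ℝ} : a - r ≤ b - s ↔ a + ↑(s - r) ≤ b := by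
  rw [le_sub_iff_add_le (.inl (coe_ne_bot s)) (.inl (coe_ne_top s)), sub_eq_add_neg, add_assoc,
    ← coe_neg, ← coe_add, neg_add_eq_sub]

theorem add_coe_le_of_forall_mem_Ioo {a b : EReal} {s t : ℝ} (hst : s < t)
    (h : ∀ r ∈ Ioo s t, a + r ≤ b) : a + t ≤ b := by
  refine add_le_of_forall_lt fun a' ha' b' hb' => ?_
  induction b' using EReal.rec with
  | bot => simp
  | top => exact absurd hb' not_top_lt
  | coe r =>
    obtain ⟨u, hru, hut⟩ := exists_between (max_lt hst (EReal.coe_lt_coe_iff.1 hb'))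
    calc a' + r ≤ a + u :=
          add_le_add ha'.le (EReal.coe_le_coe_iff.2 ((le_max_right _ _).trans hru.le))
      _ ≤ b := h u ⟨(le_max_left _ _).trans_lt hru, hut⟩

end EReal

section Tilt

variable {X : Type*} [NormedAddCommGroup X]

def IsSharpMin (f : X → EReal) (xbar : X) (γ : ℝ) : Prop :=
  ∀ x, f xbar + ((γ * ‖x - xbar‖ : ℝ) : EReal) ≤ f x

theorem IsSharpMin.setOf_forall_le_eq_singleton {g : X → EReal} {xbar : X} {γ : ℝ}
    (h : IsSharpMin g xbar γ) (hγ : 0 < γ) (htop : g xbar ≠ ⊤) (hbot : g xbar ≠ ⊥) :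
    {y | ∀ z, g y ≤ g z} = {xbar} := by
  ext y
  refine ⟨fun hy => ?_, ?_⟩
  · have hle := (h y).trans (hy xbar)
    lift g xbar to ℝ using ⟨htop, hbot⟩ with A
    rw [← EReal.coe_add, EReal.coe_le_coe_iff] at hle
    have : ‖y - xbar‖ ≤ 0 := nonpos_of_mul_nonpos_right (by linarith) hγ
    exact sub_eq_zero.1 (norm_le_zero_iff.1 this)
  · rintro rfl z
    exact (le_add_of_nonneg_right (EReal.coe_nonneg.2 (by positivity))).trans (h z)

variable [NormedSpace ℝ X]

noncomputable def tilt (f : X → EReal) (ξ : X →L[ℝ] ℝ) : X → EReal :=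
  fun y => f y - ((ξ y : ℝ) : EReal)

theorem tilt_le_tilt_iff {f : X → EReal} {ξ : X →L[ℝ] ℝ} {y z : X} :
    tilt f ξ y ≤ tilt f ξ z ↔ f y + ↑(ξ (z - y)) ≤ f z := by
  rw [tilt, tilt, EReal.sub_coe_le_sub_coe_iff, map_sub]

theorem IsSharpMin.tilt {f : X → EReal} {xbar : X} {γ : ℝ} (h : IsSharpMin f xbar γ)
    (ξ : X →L[ℝ] ℝ) : IsSharpMin (tilt f ξ) xbar (γ - ‖ξ‖) := by
  intro x
  rw [_root_.tilt, _root_.tilt, EReal.le_sub_iff_add_le (.inl (EReal.coe_ne_bot _))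
    (.inl (EReal.coe_ne_top _)), sub_eq_add_neg, add_assoc, add_assoc, ← EReal.coe_neg,
    ← EReal.coe_add, ← EReal.coe_add]
  calc _ ≤ f xbar + ↑(γ * ‖x - xbar‖) := by
        gcongr
        have := (le_abs_self _).trans (ξ.le_opNorm (x - xbar))
        rw [map_sub] at this
        linarith
    _ ≤ f x := h x

theorem isSharpMin_of_forall_le_tilt {f : X → EReal} {xbar : X} {γ : ℝ} (hγ : 0 < γ)
    (h : ∀ ξ : X →L[ℝ] ℝ, ‖ξ‖ < γ → ∀ z, tilt f ξ xbar ≤ tilt f ξ z) :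
    IsSharpMin f xbar γ := by
  intro x
  rcases eq_or_ne x xbar with rfl | hx
  · simp
  have hn : 0 < ‖x - xbar‖ := norm_pos_iff.2 (sub_ne_zero.2 hx)
  obtain ⟨g, hg, hgx⟩ := exists_dual_vector ℝ (x - xbar) hn.ne'
  refine EReal.add_coe_le_of_forall_mem_Ioo (neg_lt_self (mul_pos hγ hn)) fun r hr => ?_
  have hξ : ‖(r / ‖x - xbar‖) • g‖ < γ := by
    rw [norm_smul, hg, mul_one, Real.norm_eq_abs, abs_lt, lt_div_iff₀ hn, div_lt_iff₀ hn]
    exact ⟨by linarith [hr.1], hr.2⟩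
  have := tilt_le_tilt_iff.1 (h _ hξ x)
  rwa [smul_apply, hgx, smul_eq_mul, RCLike.ofReal_real_eq_id, id,
    div_mul_cancel₀ _ hn.ne'] at this

end Tilt

/-- tilt-invariance characterization of sharp minimizers. -/
theorem tilt_invariance_iff_sharp
    {X : Type*} [NormedAddCommGroup X] [NormedSpace ℝ X]
    (f : X → EReal) (hbot : ∀ x, f x ≠ ⊥) (xbar : X) (hdom : f xbar ≠ ⊤)
    (γ : ℝ) (hγ : 0 < γ) :
    (∀ ξ : X →L[ℝ] ℝ, ‖ξ‖ < γ →
        {y : X | ∀ z : X, f y - ((ξ y : ℝ) : EReal) ≤ f z - ((ξ z : ℝ) : EReal)} = {xbar})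
      ↔ (∀ x : X, f xbar + ((γ * ‖x - xbar‖ : ℝ) : EReal) ≤ f x) := by
  refine ⟨fun h => isSharpMin_of_forall_le_tilt hγ fun ξ hξ => (h ξ hξ).symm.subset rfl,
    fun h ξ hξ => ?_⟩
  have htilt_eq : tilt f ξ xbar = ↑((f xbar).toReal - ξ xbar) := by
    rw [tilt, EReal.coe_sub, EReal.coe_toReal hdom (hbot xbar)]
  exact (IsSharpMin.tilt h ξ).setOf_forall_le_eq_singleton (sub_pos.2 hξ)
    (htilt_eq ▸ EReal.coe_ne_top _) (htilt_eq ▸ EReal.coe_ne_bot _)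
end

section
/- If for every ξ ∈ X* with ‖ξ‖ < γ the point x̄ is the unique global minimizer of y ↦ f(y) − ⟨ξ, y⟩, then for every Lipschitz function ζ : X → ℝ with Lipschitz constant strictly less than γ, x̄ is the unique global minimizer of y ↦ f(y) + ζ(y); and conversely. -/
/-!
A tilt by `ξ` with `‖ξ‖ < γ` is itself a Lipschitz perturbation, which gives one direction.
Conversely, to see that `x̄` strictly beats `z ≠ x̄` for `f + ζ`, tilt by `ξ = K • g`, where `g`
is a norming functional of `z - x̄`: then `ξ z - ξ x̄ = K ‖z - x̄‖` dominates `ζ x̄ - ζ z`,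
so the strict inequality for the tilted function transfers to `f + ζ`.
-/

theorem setOf_forall_le_eq_singleton_iff {α β : Type*} [LinearOrder β] (φ : α → β) (a : α) :
    {y | ∀ z, φ y ≤ φ z} = {a} ↔ ∀ z, z ≠ a → φ a < φ z := by
  constructor
  · intro h z hz
    have ha : a ∈ {y | ∀ z, φ y ≤ φ z} := h ▸ rfl
    have hz' : z ∉ {y | ∀ z, φ y ≤ φ z} := by rw [h]; exact hz
    obtain ⟨w, hw⟩ := not_forall.1 hz'
    exact (ha w).trans_lt (not_le.1 hw)
  · intro h
    ext y
    simp only [Set.mem_ofPred_eq, Set.mem_singleton_iff]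
    refine ⟨fun hy => by_contra fun hya => (hy a).not_gt (h y hya), ?_⟩
    rintro rfl z
    rcases eq_or_ne z y with rfl | hz
    · exact le_rfl
    · exact (h z hz).le

theorem EReal.add_coe_lt_add_coe_of_sub_le {a b : EReal} {r s r' s' : ℝ}
    (h : a + r < b + s) (hrs : r' - r ≤ s' - s) : a + r' < b + s' :=
  calc a + r' = a + r + ((r' - r : ℝ) : EReal) := by
          rw [add_assoc, ← EReal.coe_add, add_sub_cancel]
    _ < b + s + ((r' - r : ℝ) : EReal) := EReal.add_lt_add_right_coe h _
    _ ≤ b + s + ((s' - s : ℝ) : EReal) := by gcongr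
    _ = b + s' := by rw [add_assoc, ← EReal.coe_add, add_sub_cancel]

theorem tilt_invariance_iff_lipschitz_invariance_general
    {X : Type*} [NormedAddCommGroup X] [NormedSpace ℝ X]
    (f : X → EReal) (xbar : X)
    (γ : ℝ) :
    (∀ ξ : X →L[ℝ] ℝ, ‖ξ‖ < γ →
        {y : X | ∀ z : X, f y - ((ξ y : ℝ) : EReal) ≤ f z - ((ξ z : ℝ) : EReal)} = {xbar})
      ↔ (∀ (ζ : X → ℝ) (K : NNReal), LipschitzWith K ζ → (K : ℝ) < γ →
          {y : X | ∀ z : X, f y + ((ζ y : ℝ) : EReal) ≤ f z + ((ζ z : ℝ) : EReal)} = {xbar}) := by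
  simp only [setOf_forall_le_eq_singleton_iff, sub_eq_add_neg, ← EReal.coe_neg]
  constructor
  · intro h ζ K hζ hK z hz
    obtain ⟨g, hg, hgz⟩ := exists_dual_vector'' ℝ (z - xbar)
    have hξ : ‖(K : ℝ) • g‖ < γ := by
      rw [norm_smul, Real.norm_of_nonneg K.coe_nonneg]
      exact (mul_le_of_le_one_right K.coe_nonneg hg).trans_lt hK
    have hζz : ζ xbar - ζ z ≤ K * ‖z - xbar‖ := by
      rw [← dist_eq_norm, dist_comm]
      exact (le_abs_self _).trans (hζ.dist_le_mul xbar z)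
    refine EReal.add_coe_lt_add_coe_of_sub_le (h _ hξ z hz) ?_
    have hξz : K * g z - K * g xbar = K * ‖z - xbar‖ := by
      rw [← mul_sub, ← map_sub, hgz, RCLike.ofReal_real_eq_id, id]
    simp only [FunLike.coe_smul, Pi.smul_apply, smul_eq_mul]
    linarith
  · intro h ξ hξ
    exact h (fun y => -ξ y) ‖ξ‖₊ ξ.lipschitz.neg (by rwa [coe_nnnorm])

/-- tilt invariance by dual elements of norm < γ is equivalent to
invariance under Lipschitz perturbations with Lipschitz constant < γ. -/
theorem tilt_invariance_iff_lipschitz_invariance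
    {X : Type*} [NormedAddCommGroup X] [NormedSpace ℝ X]
    (f : X → EReal) (hbot : ∀ x, f x ≠ ⊥) (xbar : X) (hdom : f xbar ≠ ⊤)
    (γ : ℝ) (hγ : 0 < γ) :
    (∀ ξ : X →L[ℝ] ℝ, ‖ξ‖ < γ →
        {y : X | ∀ z : X, f y - ((ξ y : ℝ) : EReal) ≤ f z - ((ξ z : ℝ) : EReal)} = {xbar})
      ↔ (∀ (ζ : X → ℝ) (K : NNReal), LipschitzWith K ζ → (K : ℝ) < γ →
          {y : X | ∀ z : X, f y + ((ζ y : ℝ) : EReal) ≤ f z + ((ζ z : ℝ) : EReal)} = {xbar}) :=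
  tilt_invariance_iff_lipschitz_invariance_general f xbar γ
end

section
/- Let X be a Banach space and f : X → ℝ ∪ {+∞} proper, lower semicontinuous, and bounded below. If there exists γ > 0 such that the global slope satisfies |∂f|(x) ≥ γ for all x ≠ x̄, then x̄ is a global minimizer of f. -/
open Set

/-- The global slope `|∂f|(x) = sup_{y ≠ x} max{f x − f y, 0} / ‖x − y‖`. -/
noncomputable def globalSlope {X : Type*} [NormedAddCommGroup X]
    (f : X → EReal) (x : X) : EReal :=
  ⨆ y ∈ {y : X | y ≠ x}, max (f x - f y) 0 * (((‖x - y‖)⁻¹ : ℝ) : EReal)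

/-! Ekeland's principle, applied with parameter `γ / 2` at `y` to the real-valued truncation
`min f (f y + 1)`, gives a point `z` with `f z ≤ f y` such that `f z ≤ f w + (γ / 2) ‖w - z‖` for
every `w`. The global slope of `f` at `z` is then at most `γ / 2 < γ`, which forces `z = x̄`. -/

open Filter Topology Metric

lemma exists_mem_forall_le_add {α : Type*} {g : α → ℝ} {s : Set α} (hs : s.Nonempty)
    (hbdd : BddBelow (g '' s)) {δ : ℝ} (hδ : 0 < δ) : ∃ b ∈ s, ∀ y ∈ s, g b ≤ g y + δ := by
  obtain ⟨_, ⟨b, hb, rfl⟩, hlt⟩ :=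
    exists_lt_of_csInf_lt (hs.image g) (lt_add_of_pos_right (sInf (g '' s)) hδ)
  exact ⟨b, hb, fun y hy => hlt.le.trans
    (add_le_add_left (csInf_le hbdd (mem_image_of_mem g hy)) δ)⟩

section Ekeland

variable {X : Type*} [MetricSpace X] {g : X → ℝ} {ε : ℝ}

def descentSet (g : X → ℝ) (ε : ℝ) (a : X) : Set X :=
  {y | g y + ε * dist y a ≤ g a}

lemma mem_descentSet_self (a : X) : a ∈ descentSet g ε a := by
  simp [descentSet]

lemma descentSet_subset (hε : 0 ≤ ε) {a b : X} (hb : b ∈ descentSet g ε a) :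
    descentSet g ε b ⊆ descentSet g ε a := by
  intro y hy
  simp only [descentSet, mem_ofPred_eq] at hb hy ⊢
  linarith [mul_le_mul_of_nonneg_left (dist_triangle y b a) hε]

lemma isClosed_descentSet (hg : LowerSemicontinuous g) (a : X) :
    IsClosed (descentSet g ε a) :=
  (hg.add ((continuous_const.mul (continuous_id.dist continuous_const)).lowerSemicontinuous
    (f := fun y => ε * dist y a))).isClosed_preimage (g a)

lemma exists_seq_mem_descentSet (hbdd : BddBelow (range g)) (hε : 0 ≤ ε) (x₀ : X) :
    ∃ x : ℕ → X, x 0 = x₀ ∧ (∀ n, x (n + 1) ∈ descentSet g ε (x n)) ∧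
      ∀ n, ∀ y ∈ descentSet g ε (x (n + 1)), ε * dist y (x (n + 1)) ≤ (1 / 2) ^ n := by
  have hnext (n : ℕ) (a : X) : ∃ b ∈ descentSet g ε a,
      ∀ y ∈ descentSet g ε a, g b ≤ g y + (1 / 2) ^ n :=
    exists_mem_forall_le_add ⟨a, mem_descentSet_self a⟩
      (hbdd.mono (image_subset_range g _)) (by positivity)
  choose F hF_mem hF_le using hnext
  let x : ℕ → X := fun n => Nat.rec x₀ F n
  refine ⟨x, rfl, fun n => hF_mem n (x n), fun n y hy => ?_⟩
  have hy_prev : y ∈ descentSet g ε (x n) := descentSet_subset hε (hF_mem n (x n)) hy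
  have := hF_le n (x n) y hy_prev
  simp only [descentSet, mem_ofPred_eq] at hy
  linarith

theorem LowerSemicontinuous.exists_forall_lt_add_mul_dist [CompleteSpace X]
    (hg : LowerSemicontinuous g) (hbdd : BddBelow (range g)) (hε : 0 < ε) (x₀ : X) :
    ∃ z, g z + ε * dist z x₀ ≤ g x₀ ∧ ∀ w ≠ z, g z < g w + ε * dist w z := by
  obtain ⟨x, hx₀, hstep, hrad⟩ := exists_seq_mem_descentSet hbdd hε.le x₀
  set T : ℕ → Set X := fun n => descentSet g ε (x (n + 1))
  have hanti : Antitone T :=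
    antitone_nat_of_succ_le fun n => descentSet_subset hε.le (hstep (n + 1))
  have hball (n : ℕ) : T n ⊆ closedBall (x (n + 1)) ((1 / 2) ^ n / ε) := fun y hy => by
    rw [mem_closedBall, le_div_iff₀ hε, mul_comm]
    exact hrad n y hy
  have hdiam_le (n : ℕ) : diam (T n) ≤ 2 * ((1 / 2) ^ n / ε) :=
    (diam_mono (hball n) isBounded_closedBall).trans (diam_closedBall (by positivity))
  have hdiam : Tendsto (fun n => diam (T n)) atTop (𝓝 0) := by
    refine squeeze_zero (fun n => diam_nonneg) hdiam_le ?_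
    simpa using ((tendsto_pow_atTop_nhds_zero_of_lt_one (by norm_num : (0 : ℝ) ≤ 1 / 2)
      (by norm_num)).div_const ε).const_mul 2
  obtain ⟨z, hz⟩ := nonempty_iInter_of_nonempty_biInter (fun n => isClosed_descentSet hg _)
    (fun n => isBounded_closedBall.subset (hball n))
    (fun N => ⟨x (N + 1), mem_iInter₂.2 fun n hn => hanti hn (mem_descentSet_self _)⟩) hdiam
  rw [mem_iInter] at hz
  refine ⟨z, hx₀ ▸ descentSet_subset hε.le (hstep 0) (hz 0), fun w hw => ?_⟩
  by_contra! hwz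
  have hw_mem (n : ℕ) : w ∈ T n := descentSet_subset hε.le (hz n) hwz
  have : dist w z ≤ 0 := ge_of_tendsto' hdiam fun n =>
    dist_le_diam_of_mem (isBounded_closedBall.subset (hball n)) (hw_mem n) (hz n)
  exact hw (dist_le_zero.1 this)

end Ekeland

section Truncation

variable {X : Type*} {f : X → EReal} {t : ℝ}

noncomputable def truncToReal (f : X → EReal) (t : ℝ) (x : X) : ℝ :=
  (min (f x) t).toReal

lemma coe_truncToReal {x : X} (hx : f x ≠ ⊥) : (truncToReal f t x : EReal) = min (f x) t :=
  EReal.coe_toReal (ne_top_of_le_ne_top (EReal.coe_ne_top t) (min_le_right _ _))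
    (lt_min (bot_lt_iff_ne_bot.2 hx) (EReal.bot_lt_coe t)).ne'

lemma coe_truncToReal_of_lt {x : X} (hx : f x ≠ ⊥) (hlt : (truncToReal f t x : EReal) < t) :
    (truncToReal f t x : EReal) = f x := by
  rw [coe_truncToReal hx] at hlt ⊢
  exact min_eq_left (min_lt_iff.1 hlt |>.resolve_right (lt_irrefl _)).le

lemma bddBelow_range_truncToReal {c : ℝ} (hc : ∀ x, (c : EReal) ≤ f x) :
    BddBelow (range (truncToReal f t)) := by
  refine ⟨min c t, forall_mem_range.2 fun x => ?_⟩
  have hx : f x ≠ ⊥ := ne_bot_of_le_ne_bot (EReal.coe_ne_bot c) (hc x)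
  rw [← EReal.coe_le_coe_iff, coe_truncToReal hx]
  exact le_min ((EReal.coe_le_coe_iff.2 (min_le_left c t)).trans (hc x))
    (EReal.coe_le_coe_iff.2 (min_le_right c t))

lemma lowerSemicontinuous_truncToReal [TopologicalSpace X] (hf : LowerSemicontinuous f)
    (hbot : ∀ x, f x ≠ ⊥) :
    LowerSemicontinuous (truncToReal f t) := by
  refine lowerSemicontinuous_iff_isClosed_preimage.2 fun r => ?_
  have hpre : truncToReal f t ⁻¹' Iic r = (fun x => min (f x) t) ⁻¹' Iic (r : EReal) := by
    ext x
    simp [← coe_truncToReal (t := t) (hbot x)]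
  rw [hpre]
  exact (hf.inf lowerSemicontinuous_const).isClosed_preimage _

end Truncation

lemma globalSlope_le {X : Type*} [NormedAddCommGroup X] {f : X → EReal} {z : X} {ε : ℝ}
    (hε : 0 ≤ ε) (h : ∀ w ≠ z, f z ≤ f w + ((ε * dist w z : ℝ) : EReal)) :
    globalSlope f z ≤ ε := by
  refine iSup₂_le fun w (hw : w ≠ z) => ?_
  have hd : 0 < ‖z - w‖ := norm_pos_iff.2 (sub_ne_zero.2 hw.symm)
  have hmax : max (f z - f w) 0 ≤ ((ε * ‖z - w‖ : ℝ) : EReal) := by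
    refine max_le (EReal.sub_le_of_le_add' ?_) (EReal.coe_nonneg.2 (by positivity))
    simpa [dist_eq_norm, norm_sub_rev] using h w hw
  calc max (f z - f w) 0 * ((‖z - w‖⁻¹ : ℝ) : EReal)
      ≤ ((ε * ‖z - w‖ : ℝ) : EReal) * ((‖z - w‖⁻¹ : ℝ) : EReal) :=
        mul_le_mul_of_nonneg_right hmax (EReal.coe_nonneg.2 (inv_pos.2 hd).le)
    _ = ε := by rw [← EReal.coe_mul, mul_inv_cancel_right₀ hd.ne']

theorem globalSlope_ge_implies_min_general
    {X : Type*} [NormedAddCommGroup X] [CompleteSpace X]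
    (f : X → EReal) (hbot : ∀ x, f x ≠ ⊥)
    (hlsc : LowerSemicontinuous f) (hbdd : ∃ c : ℝ, ∀ x, ((c : ℝ) : EReal) ≤ f x)
    (xbar : X) (γ : ℝ) (hγ : 0 < γ)
    (hslope : ∀ x : X, x ≠ xbar → ((γ : ℝ) : EReal) ≤ globalSlope f x) :
    ∀ y : X, f xbar ≤ f y := by
  intro y
  rcases eq_or_ne (f y) ⊤ with hy | hy
  · simp [hy]
  obtain ⟨c, hc⟩ := hbdd
  set t : ℝ := (f y).toReal + 1
  have hyt : f y < t := by
    rw [← EReal.coe_toReal hy (hbot y)]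
    exact EReal.coe_lt_coe_iff.2 (lt_add_one _)
  set g := truncToReal f t
  obtain ⟨z, hzy, hz⟩ :=
    (lowerSemicontinuous_truncToReal (t := t) hlsc hbot).exists_forall_lt_add_mul_dist
      (bddBelow_range_truncToReal hc) (half_pos hγ) y
  have hgy : (g y : EReal) = f y := by rw [coe_truncToReal (hbot y), min_eq_left hyt.le]
  have hgz_le : (g z : EReal) ≤ f y := by
    rw [← hgy, EReal.coe_le_coe_iff]
    exact (le_add_of_nonneg_right (by positivity)).trans hzy
  have hgz : (g z : EReal) = f z := coe_truncToReal_of_lt (hbot z) (hgz_le.trans_lt hyt)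
  have hslope_z : globalSlope f z ≤ ((γ / 2 : ℝ) : EReal) := by
    refine globalSlope_le (half_pos hγ).le fun w hw => ?_
    calc f z = g z := hgz.symm
      _ ≤ ((g w + γ / 2 * dist w z : ℝ) : EReal) := EReal.coe_le_coe_iff.2 (hz w hw).le
      _ ≤ f w + ((γ / 2 * dist w z : ℝ) : EReal) := by
        rw [EReal.coe_add, coe_truncToReal (hbot w)]
        gcongr
        exact min_le_left _ _
  obtain rfl : z = xbar := by
    by_contra hne
    have := (hslope z hne).trans hslope_z
    norm_cast at this
    linarith
  exact hgz ▸ hgz_le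

/-- on a Banach space, if the global slope of a proper lsc lower-bounded
function is ≥ γ > 0 everywhere off `xbar`, then `xbar` is a global minimizer. -/
theorem globalSlope_ge_implies_min
    {X : Type*} [NormedAddCommGroup X] [NormedSpace ℝ X] [CompleteSpace X]
    (f : X → EReal) (hbot : ∀ x, f x ≠ ⊥) (hproper : ∃ x, f x ≠ ⊤)
    (hlsc : LowerSemicontinuous f) (hbdd : ∃ c : ℝ, ∀ x, ((c : ℝ) : EReal) ≤ f x)
    (xbar : X) (γ : ℝ) (hγ : 0 < γ)
    (hslope : ∀ x : X, x ≠ xbar → ((γ : ℝ) : EReal) ≤ globalSlope f x) :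
    ∀ y : X, f xbar ≤ f y :=
  globalSlope_ge_implies_min_general f hbot hlsc hbdd xbar γ hγ hslope
end

section
/- Let X be a Banach space and f : X → ℝ ∪ {+∞} proper, lower semicontinuous, and bounded below, with x̄ ∈ dom f and γ > 0. Then x̄ is a sharp minimizer of f with modulus γ (i.e., f(x) ≥ f(x̄) + γ‖x − x̄‖ for all x ∈ X) if and only if |∂f|(x) ≥ γ for all x ∈ X \ {x̄}, where |∂f|(x) = sup_{y ≠ x} max{f(x) − f(y), 0}/‖x − y‖ is the global slope. -/
open Set

/-- A weak form of Ekeland's variational principle sufficient for our purposes. -/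
lemma ekeland_aux {X : Type*} [NormedAddCommGroup X] [CompleteSpace X]
    (F : X → ℝ) (hF : LowerSemicontinuous F) (c : ℝ) (hc : ∀ x, c ≤ F x)
    (κ : ℝ) (hκ : 0 < κ) (x₀ : X) :
    ∃ v : X, F v + κ * ‖v - x₀‖ ≤ F x₀ ∧ ∀ y, y ≠ v → F v < F y + κ * ‖y - v‖ := by
  set S : X → Set X := fun x => {y | F y + κ * ‖y - x‖ ≤ F x} with hS
  have hmem_self : ∀ x, x ∈ S x := by
    intro x; simp [hS]
  have htrans : ∀ {x y z : X}, y ∈ S x → z ∈ S y → z ∈ S x := by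
    intro x y z hy hz
    simp only [hS, mem_setOf_eq] at *
    have h3 : ‖z - x‖ ≤ ‖z - y‖ + ‖y - x‖ := norm_sub_le_norm_sub_add_norm_sub z y x
    nlinarith
  have hclosed : ∀ x, IsClosed (S x) := by
    intro x
    have : LowerSemicontinuous (fun y => F y + κ * ‖y - x‖) :=
      hF.add ((continuous_const.mul ((continuous_id.sub continuous_const).norm)).lowerSemicontinuous)
    exact this.isClosed_preimage (F x)
  have hbdd : ∀ x, BddBelow (F '' S x) := fun x => ⟨c, by rintro _ ⟨y, -, rfl⟩; exact hc y⟩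
  have hne : ∀ x, (F '' S x).Nonempty := fun x => ⟨F x, x, hmem_self x, rfl⟩
  have key : ∀ (x : X) (n : ℕ), ∃ y, y ∈ S x ∧ F y < sInf (F '' S x) + (1/2)^n := by
    intro x n
    have h : sInf (F '' S x) < sInf (F '' S x) + (1/2)^n := by
      have : (0:ℝ) < (1/2)^n := by positivity
      linarith
    obtain ⟨a, ⟨y, hy, rfl⟩, ha⟩ := exists_lt_of_csInf_lt (hne x) h
    exact ⟨y, hy, ha⟩
  choose next hnext_mem hnext_lt using key
  set u : ℕ → X := fun n => Nat.rec x₀ (fun n xn => next xn n) n with hu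
  have hu0 : u 0 = x₀ := rfl
  have huS : ∀ n, u (n+1) = next (u n) n := fun n => rfl
  have hchain : ∀ n, u (n+1) ∈ S (u n) := fun n => by rw [huS]; exact hnext_mem (u n) n
  have hchain' : ∀ n m, n ≤ m → u m ∈ S (u n) := by
    intro n m hnm
    induction m, hnm using Nat.le_induction with
    | base => exact hmem_self _
    | succ m hnm ih => exact htrans ih (hchain m)
  have bound3 : ∀ n, ∀ y ∈ S (u (n+1)), κ * ‖y - u (n+1)‖ ≤ (1/2)^n := by
    intro n y hy
    have h1 : F y + κ * ‖y - u (n+1)‖ ≤ F (u (n+1)) := hy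
    have h2 : F (u (n+1)) < sInf (F '' S (u n)) + (1/2)^n := by
      rw [huS]; exact hnext_lt (u n) n
    have h3 : y ∈ S (u n) := htrans (hchain n) hy
    have h4 : sInf (F '' S (u n)) ≤ F y := csInf_le (hbdd _) ⟨y, h3, rfl⟩
    linarith
  set C : ℝ := max ((F x₀ - c)/κ) (2/κ) with hC
  have hcauchy : CauchySeq u := by
    apply cauchySeq_of_le_geometric (1/2) C (by norm_num)
    intro n
    rw [dist_eq_norm]
    match n with
    | 0 =>
      have h1 : F (u 1) + κ * ‖u 1 - u 0‖ ≤ F (u 0) := hchain 0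
      have h2 : c ≤ F (u 1) := hc _
      have : ‖u 1 - u 0‖ ≤ (F x₀ - c)/κ := by
        rw [le_div_iff₀ hκ, hu0] at *
        nlinarith [h1, h2]
      calc ‖u 0 - u 1‖ = ‖u 1 - u 0‖ := norm_sub_rev _ _
        _ ≤ (F x₀ - c)/κ := this
        _ ≤ C * (1/2)^0 := by rw [pow_zero, mul_one]; exact le_max_left _ _
    | (m+1) =>
      have h1 : κ * ‖u (m+2) - u (m+1)‖ ≤ (1/2)^m := bound3 m _ (hchain (m+1))
      have h2 : ‖u (m+1) - u (m+2)‖ ≤ (1/2)^m / κ := by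
        rw [le_div_iff₀ hκ]
        calc ‖u (m+1) - u (m+2)‖ * κ = κ * ‖u (m+2) - u (m+1)‖ := by
              rw [norm_sub_rev]; ring
          _ ≤ (1/2)^m := h1
      calc ‖u (m+1) - u (m+2)‖ ≤ (1/2)^m / κ := h2
        _ = (2/κ) * (1/2)^(m+1) := by field_simp; ring
        _ ≤ C * (1/2)^(m+1) := by
            apply mul_le_mul_of_nonneg_right (le_max_right _ _) (by positivity)
  obtain ⟨v, hv⟩ := cauchySeq_tendsto_of_complete hcauchy
  have hvS : ∀ n, v ∈ S (u n) := by
    intro n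
    refine (hclosed (u n)).mem_of_tendsto hv ?_
    filter_upwards [Filter.eventually_atTop.2 ⟨n, fun m hm => hchain' n m hm⟩] with m hm
    exact hm
  refine ⟨v, ?_, ?_⟩
  · have := hvS 0; rw [hu0] at this; exact this
  · intro y hy
    by_contra hcon
    push_neg at hcon
    have hySv : y ∈ S v := hcon
    have hyn : ∀ n, y ∈ S (u n) := fun n => htrans (hvS n) hySv
    have hdist : ∀ n, κ * ‖y - v‖ ≤ 2 * (1/2)^n := by
      intro n
      have h1 : κ * ‖y - u (n+1)‖ ≤ (1/2)^n := bound3 n y (hyn (n+1))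
      have h2 : κ * ‖v - u (n+1)‖ ≤ (1/2)^n := bound3 n v (hvS (n+1))
      have h3 : ‖y - v‖ ≤ ‖y - u (n+1)‖ + ‖v - u (n+1)‖ := by
        calc ‖y - v‖ ≤ ‖y - u (n+1)‖ + ‖u (n+1) - v‖ := norm_sub_le_norm_sub_add_norm_sub _ _ _
          _ = ‖y - u (n+1)‖ + ‖v - u (n+1)‖ := by rw [norm_sub_rev (u (n+1))]
      nlinarith
    have hpos : 0 < κ * ‖y - v‖ := by
      apply mul_pos hκ
      rw [norm_pos_iff]
      exact sub_ne_zero_of_ne hy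
    obtain ⟨n, hn⟩ := exists_pow_lt_of_lt_one (by linarith : (0:ℝ) < κ * ‖y - v‖ / 2)
      (by norm_num : (1:ℝ)/2 < 1)
    have := hdist n
    nlinarith

/-- Lower semicontinuity of the real-valued truncation of an `EReal`-valued
lower semicontinuous function bounded below. -/
lemma trunc_lsc {X : Type*} [NormedAddCommGroup X] (f : X → EReal)
    (hlsc : LowerSemicontinuous f) (c : ℝ) (hc : ∀ x, ((c : ℝ) : EReal) ≤ f x) (M : ℝ) :
    LowerSemicontinuous (fun x => (min (f x) ((M : ℝ) : EReal)).toReal) := by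
  intro x y hy
  have hmt : min (f x) ((M:ℝ):EReal) ≠ ⊤ :=
    ne_top_of_le_ne_top (EReal.coe_ne_top M) (min_le_right _ _)
  have hmb : min (f x) ((M:ℝ):EReal) ≠ ⊥ :=
    ne_bot_of_le_ne_bot (EReal.coe_ne_bot (min c M))
      (le_min ((EReal.coe_le_coe_iff.2 (min_le_left c M)).trans (hc x)) (EReal.coe_le_coe_iff.2 (min_le_right c M)))
  have h1 : (y : EReal) < min (f x) ((M:ℝ):EReal) := by
    rw [← EReal.coe_toReal hmt hmb]
    exact_mod_cast hy
  have hyf : (y : EReal) < f x := lt_of_lt_of_le h1 (min_le_left _ _)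
  have hyM : (y : EReal) < ((M:ℝ):EReal) := lt_of_lt_of_le h1 (min_le_right _ _)
  filter_upwards [hlsc x y hyf] with z hz
  have h2 : (y : EReal) < min (f z) ((M:ℝ):EReal) := lt_min hz hyM
  have hmt' : min (f z) ((M:ℝ):EReal) ≠ ⊤ :=
    ne_top_of_le_ne_top (EReal.coe_ne_top M) (min_le_right _ _)
  have hmb' : min (f z) ((M:ℝ):EReal) ≠ ⊥ :=
    ne_bot_of_le_ne_bot (EReal.coe_ne_bot (min c M))
      (le_min ((EReal.coe_le_coe_iff.2 (min_le_left c M)).trans (hc z)) (EReal.coe_le_coe_iff.2 (min_le_right c M)))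
  rw [← EReal.coe_toReal hmt' hmb'] at h2
  exact_mod_cast h2

/-- slope characterization of sharp minimality on Banach spaces. -/
theorem sharp_min_iff_globalSlope_ge
    {X : Type*} [NormedAddCommGroup X] [NormedSpace ℝ X] [CompleteSpace X]
    (f : X → EReal) (hbot : ∀ x, f x ≠ ⊥) (hproper : ∃ x, f x ≠ ⊤)
    (hlsc : LowerSemicontinuous f) (hbdd : ∃ c : ℝ, ∀ x, ((c : ℝ) : EReal) ≤ f x)
    (xbar : X) (hdom : f xbar ≠ ⊤) (γ : ℝ) (hγ : 0 < γ) :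
    (∀ x : X, f xbar + ((γ * ‖x - xbar‖ : ℝ) : EReal) ≤ f x)
      ↔ (∀ x : X, x ≠ xbar → ((γ : ℝ) : EReal) ≤ globalSlope f x) := by
  set b : ℝ := (f xbar).toReal with hb
  have hbf : f xbar = ((b : ℝ) : EReal) := (EReal.coe_toReal hdom (hbot xbar)).symm
  constructor
  · intro hsharp x hx
    have hn : 0 < ‖x - xbar‖ := norm_pos_iff.2 (sub_ne_zero_of_ne hx)
    have hne : xbar ∈ {y : X | y ≠ x} := fun h => hx h.symm
    have hterm : ((γ:ℝ) : EReal) ≤ max (f x - f xbar) 0 * (((‖x - xbar‖)⁻¹ : ℝ) : EReal) := by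
      have hsx := hsharp x
      rcases eq_or_ne (f x) ⊤ with h | h
      · rw [h, hbf, EReal.top_sub_coe, max_eq_left le_top,
          EReal.top_mul_coe_of_pos (inv_pos.2 hn)]
        exact le_top
      · set a : ℝ := (f x).toReal with ha
        have haf : f x = ((a : ℝ) : EReal) := (EReal.coe_toReal h (hbot x)).symm
        rw [haf, hbf] at hsx ⊢
        rw [← EReal.coe_add, EReal.coe_le_coe_iff] at hsx
        have hab : γ * ‖x - xbar‖ ≤ a - b := by linarith
        rw [← EReal.coe_sub]
        rw [max_eq_left (by
          rw [← EReal.coe_zero, EReal.coe_le_coe_iff]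
          nlinarith)]
        rw [← EReal.coe_mul, EReal.coe_le_coe_iff]
        rw [← div_eq_mul_inv, le_div_iff₀ hn]
        linarith
    unfold globalSlope
    exact le_trans hterm (le_iSup₂ (f := fun y (_ : y ∈ {y : X | y ≠ x}) =>
      max (f x - f y) 0 * (((‖x - y‖)⁻¹ : ℝ) : EReal)) xbar hne)
  · intro hslope x
    rcases eq_or_ne x xbar with rfl | hx
    · simp
    rcases eq_or_ne (f x) ⊤ with h | h
    · rw [h]; exact le_top
    obtain ⟨c, hc⟩ := hbdd
    set a : ℝ := (f x).toReal with ha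
    have haf : f x = ((a : ℝ) : EReal) := (EReal.coe_toReal h (hbot x)).symm
    have hn : 0 < ‖x - xbar‖ := norm_pos_iff.2 (sub_ne_zero_of_ne hx)
    suffices hsuf : ∀ κ : ℝ, 0 < κ → κ < γ → b + κ * ‖x - xbar‖ ≤ a by
      have hreal : b + γ * ‖x - xbar‖ ≤ a := by
        by_contra hcon
        push_neg at hcon
        set κ : ℝ := (max ((a - b) / ‖x - xbar‖) 0 + γ) / 2 with hκdef
        have hmaxlt : max ((a - b) / ‖x - xbar‖) 0 < γ := by
          apply max_lt _ hγ
          rw [div_lt_iff₀ hn]; linarith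
        have hκpos : 0 < κ := by
          have := le_max_right ((a - b) / ‖x - xbar‖) (0:ℝ)
          rw [hκdef]; linarith
        have hκlt : κ < γ := by rw [hκdef]; linarith
        have h1 := hsuf κ hκpos hκlt
        have h2 : (a - b) / ‖x - xbar‖ < κ := by
          have := le_max_left ((a - b) / ‖x - xbar‖) (0:ℝ)
          rw [hκdef]; linarith
        rw [div_lt_iff₀ hn] at h2
        nlinarith
      rw [haf, hbf, ← EReal.coe_add, EReal.coe_le_coe_iff]
      exact hreal
    intro κ hκ0 hκγ
    set M : ℝ := max a c + 1 with hM
    have haM : a < M := by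
      have := le_max_left a c
      rw [hM]; linarith
    set F : X → ℝ := fun z => (min (f z) ((M : ℝ) : EReal)).toReal with hF
    have hFlsc : LowerSemicontinuous F := trunc_lsc f hlsc c hc M
    have hFlb : ∀ z, min c M ≤ F z := by
      intro z
      have h1 : ((min c M : ℝ) : EReal) ≤ min (f z) ((M:ℝ):EReal) :=
        le_min ((EReal.coe_le_coe_iff.2 (min_le_left c M)).trans (hc z))
          (EReal.coe_le_coe_iff.2 (min_le_right c M))
      have h2 := EReal.toReal_le_toReal h1 (EReal.coe_ne_bot _)
        (ne_top_of_le_ne_top (EReal.coe_ne_top M) (min_le_right _ _))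
      rwa [EReal.toReal_coe] at h2
    have hfin : ∀ z, F z < M → f z = ((F z : ℝ) : EReal) := by
      intro z hz
      have hmt : min (f z) ((M:ℝ):EReal) ≠ ⊤ :=
        ne_top_of_le_ne_top (EReal.coe_ne_top M) (min_le_right _ _)
      have hmb : min (f z) ((M:ℝ):EReal) ≠ ⊥ :=
        ne_bot_of_le_ne_bot (EReal.coe_ne_bot (min c M))
          (le_min ((EReal.coe_le_coe_iff.2 (min_le_left c M)).trans (hc z))
            (EReal.coe_le_coe_iff.2 (min_le_right c M)))
      have hlt : min (f z) ((M:ℝ):EReal) < ((M:ℝ):EReal) := by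
        rw [← EReal.coe_toReal hmt hmb, EReal.coe_lt_coe_iff]
        exact hz
      have hfz : min (f z) ((M:ℝ):EReal) = f z := by
        rcases min_cases (f z) ((M:ℝ):EReal) with ⟨heq, -⟩ | ⟨heq, -⟩
        · exact heq
        · rw [heq] at hlt; exact absurd hlt (lt_irrefl _)
      have : F z = (f z).toReal := by rw [hF]; simp only [hfz]
      rw [this]
      exact (EReal.coe_toReal (hfz ▸ hmt) (hfz ▸ hmb)).symm
    have hFx : F x = a := by
      rw [hF]; simp only [haf]
      rw [min_eq_left (EReal.coe_le_coe_iff.2 haM.le), EReal.toReal_coe]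
    obtain ⟨v, hv1, hv2⟩ := ekeland_aux F hFlsc (min c M) hFlb κ hκ0 x
    rw [hFx] at hv1
    have hFvM : F v < M := by
      have : 0 ≤ κ * ‖v - x‖ := by positivity
      linarith
    have hfv : f v = ((F v : ℝ) : EReal) := hfin v hFvM
    have hveq : v = xbar := by
      by_contra hvne
      have hsl := hslope v hvne
      have hlt2 : ((κ:ℝ) : EReal) < globalSlope f v :=
        lt_of_lt_of_le (EReal.coe_lt_coe_iff.2 hκγ) hsl
      unfold globalSlope at hlt2
      obtain ⟨y, hy⟩ := lt_iSup_iff.1 hlt2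
      obtain ⟨hyv, hy⟩ := lt_iSup_iff.1 hy
      have hyv' : y ≠ v := hyv
      have hnvy : 0 < ‖v - y‖ := norm_pos_iff.2 (sub_ne_zero_of_ne (Ne.symm hyv'))
      rcases eq_or_ne (f y) ⊤ with hT | hT
      · rw [hT, EReal.sub_top, max_eq_right bot_le, zero_mul] at hy
        have : (κ:ℝ) < 0 := by
          rw [← EReal.coe_zero, EReal.coe_lt_coe_iff] at hy
          exact hy
        linarith
      · set ty : ℝ := (f y).toReal with hty
        have htyf : f y = ((ty : ℝ) : EReal) := (EReal.coe_toReal hT (hbot y)).symm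
        rw [hfv, htyf, ← EReal.coe_sub] at hy
        have hmax : max (((F v - ty : ℝ)) : EReal) 0 = ((max (F v - ty) 0 : ℝ) : EReal) := by
          rcases le_total (F v - ty) 0 with h' | h'
          · rw [max_eq_right, max_eq_right h']
            rw [← EReal.coe_zero]
            exact EReal.coe_le_coe_iff.2 h'
          · rw [max_eq_left, max_eq_left h']
            rw [← EReal.coe_zero]
            exact EReal.coe_le_coe_iff.2 h'
        rw [hmax, ← EReal.coe_mul, EReal.coe_lt_coe_iff] at hy
        rw [← div_eq_mul_inv, lt_div_iff₀ hnvy] at hy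
        have hpos' : 0 < κ * ‖v - y‖ := by positivity
        have hmax2 : max (F v - ty) 0 = F v - ty := by
          rcases max_cases (F v - ty) (0:ℝ) with ⟨heq, -⟩ | ⟨heq, -⟩
          · exact heq
          · rw [heq] at hy; linarith
        rw [hmax2] at hy
        -- F y ≤ ty
        have hFy : F y ≤ ty := by
          have h1 : min (f y) ((M:ℝ):EReal) ≤ f y := min_le_left _ _
          have h2 := EReal.toReal_le_toReal h1
            (ne_bot_of_le_ne_bot (EReal.coe_ne_bot (min c M))
              (le_min ((EReal.coe_le_coe_iff.2 (min_le_left c M)).trans (hc y))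
                (EReal.coe_le_coe_iff.2 (min_le_right c M)))) hT
          exact h2
        have hcon := hv2 y hyv'
        have : ‖y - v‖ = ‖v - y‖ := norm_sub_rev _ _
        rw [this] at hcon
        linarith
    rw [hveq] at hv1 hfv
    have hbF : b = F xbar := by rw [hb, hfv, EReal.toReal_coe]
    rw [hbF, show ‖x - xbar‖ = ‖xbar - x‖ from norm_sub_rev _ _]
    exact hv1
end

section
/- There exists a lower-bounded (but not lower semicontinuous) function f on a Banach space X with a point x̄ such that |∂f|(x) ≥ 1 for all x ≠ x̄, yet x̄ is not a sharp minimizer of f. Concretely, f(x) := 1 − |1 − ‖x − x̄‖| for ‖x − x̄‖ < 2 and f(x) := +∞ otherwise satisfies |∂f|(x) ≥ 1 for all x ≠ x̄ but f is not bounded below by f(x̄) + ‖x − x̄‖ on X (take X = ℝ, x̄ = 0). -/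
open Set

/-- The counterexample function `f(x) = 1 − |1 − |x||` for `|x| < 2`, `+∞` otherwise,
on `X = ℝ` with `xbar = 0`. -/
noncomputable def counterexampleFun (x : ℝ) : EReal :=
  if |x| < 2 then (((1 - abs (1 - abs x)) : ℝ) : EReal) else ⊤

lemma ce_of_lt {x : ℝ} (h : |x| < 2) :
    counterexampleFun x = (((1 - abs (1 - |x|)) : ℝ) : EReal) := by
  rw [counterexampleFun, if_pos h]

lemma ce_top {x : ℝ} (h : ¬ |x| < 2) : counterexampleFun x = ⊤ := by
  rw [counterexampleFun, if_neg h]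

lemma ce_zero : counterexampleFun 0 = ((0 : ℝ) : EReal) := by
  rw [ce_of_lt (by norm_num)]; norm_num

lemma term_le_slope (f : ℝ → EReal) (x y : ℝ) (hy : y ≠ x) :
    max (f x - f y) 0 * (((‖x - y‖)⁻¹ : ℝ) : EReal) ≤ globalSlope f x :=
  le_iSup₂ (f := fun y (_ : y ∈ {y : ℝ | y ≠ x}) =>
    max (f x - f y) 0 * (((‖x - y‖)⁻¹ : ℝ) : EReal)) y hy

lemma slope_ge_of (f : ℝ → EReal) (x y a b : ℝ) (hy : y ≠ x)
    (hfx : f x = (a : EReal)) (hfy : f y = (b : EReal))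
    (h : (1 : ℝ) ≤ (a - b) * ‖x - y‖⁻¹) :
    ((1 : ℝ) : EReal) ≤ globalSlope f x := by
  refine le_trans ?_ (term_le_slope f x y hy)
  have hr : (0 : ℝ) ≤ ‖x - y‖⁻¹ := inv_nonneg.2 (norm_nonneg _)
  have hab : (0 : ℝ) ≤ a - b := by nlinarith
  rw [hfx, hfy, ← EReal.coe_sub,
    max_eq_left (by exact_mod_cast hab : (0 : EReal) ≤ ((a - b : ℝ) : EReal)),
    ← EReal.coe_mul]
  exact_mod_cast h

/-- lower semicontinuity is necessary in the slope characterization: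
`counterexampleFun` is bounded below, has global slope ≥ 1 at every `x ≠ 0`,
yet `0` is not a sharp minimizer (for any modulus γ > 0); in particular the growth
bound `f 0 + ‖x‖ ≤ f x` fails. -/
theorem lsc_necessary_counterexample :
    (∃ c : ℝ, ∀ x : ℝ, ((c : ℝ) : EReal) ≤ counterexampleFun x) ∧
    (∀ x : ℝ, x ≠ 0 → ((1 : ℝ) : EReal) ≤ globalSlope counterexampleFun x) ∧
    ¬ (∀ x : ℝ, counterexampleFun 0 + ((1 * ‖x - 0‖ : ℝ) : EReal) ≤ counterexampleFun x) ∧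
    ¬ (∃ γ : ℝ, 0 < γ ∧
        ∀ x : ℝ, counterexampleFun 0 + ((γ * ‖x - 0‖ : ℝ) : EReal) ≤ counterexampleFun x) := by
  refine ⟨⟨0, fun x => ?_⟩, fun x hx => ?_, fun h => ?_, fun ⟨γ, hγ, h⟩ => ?_⟩
  · by_cases h2 : |x| < 2
    · rw [ce_of_lt h2]
      have : (0 : ℝ) ≤ 1 - abs (1 - |x|) := by
        have := abs_nonneg x
        rcases abs_cases (1 - |x|) with ⟨he, _⟩ | ⟨he, _⟩ <;> nlinarith
      exact_mod_cast this
    · rw [ce_top h2]; exact le_top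
  · -- slope ≥ 1 at x ≠ 0
    by_cases h2 : |x| < 2
    · rcases le_or_gt (|x|) 1 with h1 | h1
      · -- 0 < |x| ≤ 1, take y = 0
        have hax : 0 < |x| := abs_pos.2 hx
        refine slope_ge_of _ x 0 (1 - abs (1 - |x|)) 0 (Ne.symm hx) (ce_of_lt h2) ce_zero ?_
        have he : abs (1 - |x|) = 1 - |x| := abs_of_nonneg (by linarith)
        rw [he, sub_zero, sub_zero]
        have : 1 - (1 - |x|) = |x| := by ring
        rw [this]
        rw [Real.norm_eq_abs, mul_inv_cancel₀ (ne_of_gt hax)]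
      · -- 1 < |x| < 2
        rcases abs_lt.1 h2 with ⟨hl, hr⟩
        rcases lt_or_ge 0 x with hp | hn
        · -- x > 0, so 1 < x < 2 ; take y = (x+2)/2
          have hx1 : 1 < x := by rwa [abs_of_pos hp] at h1
          have hyne : (x + 2) / 2 ≠ x := by intro e; nlinarith [e]
          have hy2 : |(x + 2) / 2| < 2 := by rw [abs_of_pos (by linarith)]; linarith
          refine slope_ge_of _ x ((x + 2) / 2) (1 - abs (1 - |x|)) (1 - abs (1 - |(x + 2) / 2|))
            hyne (ce_of_lt h2) (ce_of_lt hy2) ?_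
          rw [abs_of_pos hp, abs_of_pos (by linarith : (0:ℝ) < (x + 2) / 2),
            abs_of_nonpos (by linarith : 1 - x ≤ 0),
            abs_of_nonpos (by linarith : 1 - (x + 2) / 2 ≤ 0),
            Real.norm_eq_abs, abs_of_neg (by linarith : x - (x + 2) / 2 < 0)]
          have h0 : (0:ℝ) < -(x - (x + 2) / 2) := by linarith
          rw [(by ring : 1 - -(1 - x) - (1 - -(1 - (x + 2) / 2)) = -(x - (x + 2) / 2)),
            mul_inv_cancel₀ (ne_of_gt h0)]
        · -- x < 0, so -2 < x < -1 ; take y = (x-2)/2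
          have hxn : x < 0 := lt_of_le_of_ne hn hx
          have hx1 : x < -1 := by rw [abs_of_neg hxn] at h1; linarith
          have hyne : (x - 2) / 2 ≠ x := by intro e; nlinarith [e]
          have hy2 : |(x - 2) / 2| < 2 := by rw [abs_of_neg (by linarith)]; linarith
          refine slope_ge_of _ x ((x - 2) / 2) (1 - abs (1 - |x|)) (1 - abs (1 - |(x - 2) / 2|))
            hyne (ce_of_lt h2) (ce_of_lt hy2) ?_
          rw [abs_of_neg hxn, abs_of_neg (by linarith : (x - 2) / 2 < 0),
            abs_of_nonpos (by linarith : 1 - -x ≤ 0),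
            abs_of_nonpos (by linarith : 1 - -((x - 2) / 2) ≤ 0),
            Real.norm_eq_abs, abs_of_pos (by linarith : 0 < x - (x - 2) / 2)]
          have h0 : (0:ℝ) < x - (x - 2) / 2 := by linarith
          rw [(by ring : 1 - -(1 - -x) - (1 - -(1 - -((x - 2) / 2))) = x - (x - 2) / 2),
            mul_inv_cancel₀ (ne_of_gt h0)]
    · -- |x| ≥ 2 : f x = ⊤, take y = 0
      have hx0 : x ≠ 0 := hx
      have hax : (0 : ℝ) < |x| := by
        push_neg at h2; linarith
      refine le_trans ?_ (term_le_slope counterexampleFun x 0 (Ne.symm hx0))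
      rw [ce_top h2, ce_zero, EReal.top_sub_coe, max_eq_left le_top, sub_zero,
        Real.norm_eq_abs, EReal.top_mul_of_pos (by exact_mod_cast inv_pos.2 hax)]
      exact le_top
  · -- growth bound with γ = 1 fails at x = 3/2
    have h32 := h (3 / 2)
    rw [ce_zero, ce_of_lt (by rw [abs_of_pos]; norm_num; norm_num)] at h32
    rw [(by norm_num : |(3/2 : ℝ)| = 3/2)] at h32
    rw [show ((0:ℝ):EReal) + ((1 * ‖(3/2 : ℝ) - 0‖ : ℝ) : EReal)
        = ((1 * ‖(3/2 : ℝ) - 0‖ : ℝ) : EReal) by rw [← EReal.coe_add]; norm_num] at h32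
    have : (1 * ‖(3/2 : ℝ) - 0‖ : ℝ) ≤ 1 - abs (1 - 3/2) := by exact_mod_cast h32
    rw [Real.norm_eq_abs] at this
    norm_num [abs_of_pos] at this
  · -- no modulus γ > 0 works : take x = 2 - min 1 γ / 2
    set ε : ℝ := min 1 γ / 2 with hε
    have hε0 : 0 < ε := by positivity
    have hε1 : ε ≤ 1 / 2 := by
      have : min 1 γ ≤ 1 := min_le_left _ _
      simp only [hε]; linarith
    have hεγ : ε ≤ γ / 2 := by
      have : min 1 γ ≤ γ := min_le_right _ _
      simp only [hε]; linarith
    have hx := h (2 - ε)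
    have hax : |2 - ε| = 2 - ε := abs_of_pos (by linarith)
    have h2 : |(2 : ℝ) - ε| < 2 := by rw [hax]; linarith
    rw [ce_zero, ce_of_lt h2, hax] at hx
    rw [show ((0:ℝ):EReal) + ((γ * ‖(2 - ε : ℝ) - 0‖ : ℝ) : EReal)
        = ((γ * ‖(2 - ε : ℝ) - 0‖ : ℝ) : EReal) by rw [← EReal.coe_add]; ring_nf] at hx
    have hreal : γ * ‖(2 - ε : ℝ) - 0‖ ≤ 1 - abs (1 - (2 - ε)) := by exact_mod_cast hx
    rw [Real.norm_eq_abs, sub_zero, hax,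
      abs_of_nonpos (by linarith : 1 - (2 - ε) ≤ 0)] at hreal
    nlinarith
end

section
/- Let (M, d) be a complete metric space and J : M → ℝ ∪ {+∞} proper, lower semicontinuous, bounded below, with ū a minimizer of J. Fix γ > 0. Suppose there exists δ ∈ (0, +∞] such that for every Lipschitz ζ : M → ℝ with Lip ζ < γ, argmin(J + ζ) ∩ B(ū, δ) ⊆ {ū}. Then for every γ′ < γ, J(u) ≥ J(ū) + γ′·d(u, ū) for all u ∈ B(ū, δ/2); in particular, ū is a sharp local minimizer with parameters δ/2 and γ. -/
/-!
Suppose `J ū + γ' d(u, ū) > J u` for some `0 < γ' < γ` and `u` with `d(u, ū) ≤ δ/2`. Ekeland's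
variational principle at `u` with slope `γ'` gives `v` with `J v + γ' d(v, u) ≤ J u` that
minimizes `J + γ' d(·, v)`. Since `J ū ≤ J v`, this forces `d(v, u) < d(u, ū)`, so `v` lies in
`B(ū, δ)`; the perturbation `γ' d(·, v)` is `γ'`-Lipschitz, so stability gives `v = ū`, and then
`J ū + γ' d(ū, u) ≤ J u` is a contradiction. The modulus `γ` itself follows by letting `γ' → γ`.
-/

open Filter Topology Set

lemma EReal.coe_toReal_min {x : EReal} (hx : x ≠ ⊥) (b : ℝ) :
    (((min x b).toReal : ℝ) : EReal) = min x b :=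
  EReal.coe_toReal (ne_top_of_le_ne_top (EReal.coe_ne_top b) (min_le_right _ _))
    (by simp [hx])

lemma EReal.add_coe_mul_le_of_forall_lt {x y : EReal} {d γ : ℝ}
    (h : ∀ γ' < γ, x + ((γ' * d : ℝ) : EReal) ≤ y) : x + ((γ * d : ℝ) : EReal) ≤ y := by
  have hcont : Tendsto (fun t : ℝ => x + ((t * d : ℝ) : EReal)) (𝓝 γ)
      (𝓝 (x + ((γ * d : ℝ) : EReal))) :=
    (EReal.continuousAt_add (.inr (EReal.coe_ne_bot _)) (.inr (EReal.coe_ne_top _))).tendsto.comp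
      (tendsto_const_nhds.prodMk_nhds
        (continuous_coe_real_ereal.tendsto _ |>.comp ((continuous_mul_const d).tendsto γ)))
  exact le_of_tendsto (hcont.mono_left nhdsWithin_le_nhds)
    (eventually_nhdsWithin_of_forall (s := Iio γ) h)

section Ekeland

variable {M : Type*} [MetricSpace M] {f : M → ℝ} {α : ℝ}

def ekelandSet (f : M → ℝ) (α : ℝ) (x : M) : Set M := {w | f w + α * dist w x ≤ f x}

lemma self_mem_ekelandSet (x : M) : x ∈ ekelandSet f α x := by
  simp [ekelandSet]

lemma le_of_mem_ekelandSet (hα : 0 ≤ α) {x w : M} (hw : w ∈ ekelandSet f α x) :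
    f w ≤ f x :=
  le_of_add_le_of_nonneg_left hw (mul_nonneg hα dist_nonneg)

lemma ekelandSet_subset (hα : 0 ≤ α) {x y : M} (hy : y ∈ ekelandSet f α x) :
    ekelandSet f α y ⊆ ekelandSet f α x := fun w hw => by
  have hwy : f w + α * dist w y ≤ f y := hw
  have hyx : f y + α * dist y x ≤ f x := hy
  show f w + α * dist w x ≤ f x
  nlinarith [dist_triangle w y x]

lemma isClosed_ekelandSet (hf : LowerSemicontinuous f) (x : M) :
    IsClosed (ekelandSet f α x) :=
  (hf.add (continuous_const.mul (continuous_id.dist continuous_const)).lowerSemicontinuous)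
    |>.isClosed_preimage (f x)

lemma exists_mem_ekelandSet_two_mul_sub_le (hbdd : BddBelow (range f)) (x : M) :
    ∃ y ∈ ekelandSet f α x, ∀ w ∈ ekelandSet f α x, 2 * f y - f x ≤ f w := by
  set m := sInf (f '' ekelandSet f α x)
  have hm : ∀ w ∈ ekelandSet f α x, m ≤ f w := fun w hw =>
    csInf_le (hbdd.mono (image_subset_range _ _)) ⟨w, hw, rfl⟩
  rcases (hm x (self_mem_ekelandSet x)).lt_or_eq with hlt | heq
  · obtain ⟨_, ⟨y, hy, rfl⟩, hym⟩ := exists_lt_of_csInf_lt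
      (nonempty_of_mem (mem_image_of_mem f (self_mem_ekelandSet x)))
      (show m < (f x + m) / 2 by linarith)
    exact ⟨y, hy, fun w hw => by linarith [hm w hw]⟩
  · exact ⟨x, self_mem_ekelandSet x, fun w hw => by linarith [hm w hw]⟩

theorem LowerSemicontinuous.exists_ekeland_point [CompleteSpace M] (hf : LowerSemicontinuous f)
    (hbdd : BddBelow (range f)) (hα : 0 < α) (u : M) :
    ∃ v, f v + α * dist v u ≤ f u ∧ ∀ w, f v ≤ f w + α * dist v w := by
  -- Each step gets halfway down to the infimum of `f` on the current set, so every point common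
  -- to all the sets has value at least `L = lim f (x n)`.
  choose next hnext_mem hnext_le using exists_mem_ekelandSet_two_mul_sub_le (α := α) hbdd
  set x : ℕ → M := fun n => next^[n] u
  have hx_succ (n : ℕ) : x (n + 1) = next (x n) := Function.iterate_succ_apply' next n u
  set S : ℕ → Set M := fun n => ekelandSet f α (x n)
  have hS_anti : Antitone S := antitone_nat_of_succ_le fun n => by
    simpa only [S, hx_succ] using ekelandSet_subset hα.le (hnext_mem (x n))
  have hx_mem {n m : ℕ} (h : n ≤ m) : x m ∈ S n := hS_anti h (self_mem_ekelandSet _)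
  have hfx_anti : Antitone (f ∘ x) := fun n m h => le_of_mem_ekelandSet (f := f) hα.le (hx_mem h)
  have hfx_bdd : BddBelow (range (f ∘ x)) := hbdd.mono (range_comp_subset_range _ _)
  set L := ⨅ n, f (x n)
  have hL : Tendsto (f ∘ x) atTop (𝓝 L) := tendsto_atTop_ciInf hfx_anti hfx_bdd
  have hL_le (w : M) (hw : ∀ n, w ∈ S n) : L ≤ f w := by
    have hlim : Tendsto (fun n => 2 * f (x (n + 1)) - f (x n)) atTop (𝓝 (2 * L - L)) :=
      ((hL.comp (tendsto_add_atTop_nat 1)).const_mul 2).sub hL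
    have := le_of_tendsto' hlim fun n => by
      simpa only [hx_succ] using hnext_le (x n) w (hw n)
    linarith
  have hcauchy : CauchySeq x := by
    refine cauchySeq_of_le_tendsto_0' (fun n => (f (x n) - L) / α) (fun n m h => ?_) ?_
    · have : f (x m) + α * dist (x m) (x n) ≤ f (x n) := hx_mem h
      have hLm : L ≤ f (x m) := ciInf_le hfx_bdd m
      rw [dist_comm, le_div_iff₀ hα]
      linarith
    · simpa using (hL.sub_const L).div_const α
  obtain ⟨p, hp⟩ := cauchySeq_tendsto_of_complete hcauchy
  have hp_mem (n : ℕ) : p ∈ S n :=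
    (isClosed_ekelandSet hf _).mem_of_tendsto hp (eventually_atTop.2 ⟨n, fun m => hx_mem⟩)
  have hp_le : f p ≤ L := le_ciInf fun n => le_of_mem_ekelandSet hα.le (hp_mem n)
  refine ⟨p, hp_mem 0, fun w => ?_⟩
  by_contra! hw
  have hw_mem : w ∈ ekelandSet f α p := by
    show f w + α * dist w p ≤ f p
    rw [dist_comm]
    exact hw.le
  have := hL_le w fun n => ekelandSet_subset hα.le (hp_mem n) hw_mem
  linarith [mul_nonneg hα.le (dist_nonneg (x := p) (y := w))]

lemma LowerSemicontinuous.toReal_min {J : M → EReal} (hJ : LowerSemicontinuous J)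
    (hbot : ∀ w, J w ≠ ⊥) (b : ℝ) : LowerSemicontinuous fun w => (min (J w) b).toReal := by
  intro x y hy
  have hy' : (y : EReal) < min (J x) b := by
    rw [← EReal.coe_toReal_min (hbot x)]; exact_mod_cast hy
  filter_upwards [hJ x y (hy'.trans_le (min_le_left _ _))] with w hw
  have : (y : EReal) < min (J w) b := lt_min hw (hy'.trans_le (min_le_right _ _))
  rw [← EReal.coe_toReal_min (hbot w)] at this
  exact_mod_cast this

theorem LowerSemicontinuous.exists_ekeland_point_ereal [CompleteSpace M] {J : M → EReal}
    (hJ : LowerSemicontinuous J) {c : ℝ} (hc : ∀ w, (c : EReal) ≤ J w) (hα : 0 < α) {u : M}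
    (hu : J u ≠ ⊤) :
    ∃ v, J v + ((α * dist v u : ℝ) : EReal) ≤ J u ∧
      ∀ w, J v ≤ J w + ((α * dist v w : ℝ) : EReal) := by
  have hbot (w : M) : J w ≠ ⊥ := ne_bot_of_le_ne_bot (EReal.coe_ne_bot c) (hc w)
  -- Truncating at `J u` makes `J` real-valued without changing its sublevel sets below `J u`.
  set b := (J u).toReal
  have hb : J u = b := (EReal.coe_toReal hu (hbot u)).symm
  set f : M → ℝ := fun w => (min (J w) b).toReal
  have hf_coe (w : M) : (f w : EReal) = min (J w) b := EReal.coe_toReal_min (hbot w) b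
  have hf_bdd : BddBelow (range f) := ⟨c, forall_mem_range.2 fun w => by
    exact_mod_cast (le_min (hc w) (hb ▸ hc u)).trans_eq (hf_coe w).symm⟩
  obtain ⟨v, hvu, hv⟩ : ∃ v, f v + α * dist v u ≤ f u ∧ ∀ w, f v ≤ f w + α * dist v w :=
    (hJ.toReal_min hbot b).exists_ekeland_point hf_bdd hα u
  have hfu : f u = b := by simp [f, hb]
  have hJv : J v = f v := by
    rw [hf_coe, min_eq_left]
    by_contra! hlt
    have hfv : f v = b := by simp [f, min_eq_right hlt.le]
    have hvu' : v = u := by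
      rw [hfv, hfu] at hvu
      exact dist_le_zero.1 (nonpos_of_mul_nonpos_right (by linarith) hα)
    exact hlt.ne' (hvu' ▸ hb)
  refine ⟨v, ?_, fun w => ?_⟩
  · rw [hJv, hb, ← EReal.coe_add, ← hfu]
    exact_mod_cast hvu
  · calc J v = f v := hJv
      _ ≤ ((f w + α * dist v w : ℝ) : EReal) := EReal.coe_le_coe_iff.2 (hv w)
      _ = f w + ((α * dist v w : ℝ) : EReal) := EReal.coe_add _ _
      _ ≤ J w + ((α * dist v w : ℝ) : EReal) := by
        gcongr
        exact (hf_coe w).trans_le (min_le_left _ _)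

end Ekeland

theorem add_mul_dist_le_of_cone_stable {M : Type*} [MetricSpace M] [CompleteSpace M]
    {J : M → EReal} (hJ : LowerSemicontinuous J) {c : ℝ} (hc : ∀ w, (c : EReal) ≤ J w)
    {ubar : M} (hmin : ∀ v, J ubar ≤ J v) {α : ℝ} (hα : 0 < α) {δ : ENNReal}
    (hstab : ∀ v ∈ Metric.closedEBall ubar δ,
      (∀ w, J v ≤ J w + ((α * dist v w : ℝ) : EReal)) → v = ubar)
    {u : M} (hu : u ∈ Metric.closedEBall ubar (δ / 2)) :
    J ubar + ((α * dist u ubar : ℝ) : EReal) ≤ J u := by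
  by_contra! hlt
  obtain ⟨v, hvu, hv_min⟩ := hJ.exists_ekeland_point_ereal hc hα hlt.ne_top
  have hdist : dist v u ≤ dist u ubar := by
    have := lt_of_add_lt_add_left (((add_le_add (hmin v) le_rfl).trans hvu).trans_lt hlt)
    exact (lt_of_mul_lt_mul_left (EReal.coe_lt_coe_iff.1 this) hα.le).le
  have hv : v ∈ Metric.closedEBall ubar δ := by
    have hvu' : edist v u ≤ δ / 2 := by
      refine le_trans ?_ hu
      rw [edist_dist, edist_dist]
      exact ENNReal.ofReal_le_ofReal hdist
    exact (edist_triangle v u ubar).trans ((add_le_add hvu' hu).trans (ENNReal.add_halves δ).le)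
  obtain rfl := hstab v hv hv_min
  rw [dist_comm] at hvu
  exact hlt.not_ge hvu

theorem lipschitz_stability_implies_sharp_local_min_general
    {M : Type*} [MetricSpace M] [CompleteSpace M]
    (J : M → EReal)
    (hlsc : LowerSemicontinuous J) (hbdd : ∃ c : ℝ, ∀ u, ((c : ℝ) : EReal) ≤ J u)
    (ubar : M) (hmin : ∀ v : M, J ubar ≤ J v)
    (γ : ℝ) (δ : ENNReal)
    (hstab : ∀ (ζ : M → ℝ) (K : NNReal), LipschitzWith K ζ → (K : ℝ) < γ →
      ∀ u ∈ EMetric.closedBall ubar δ,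
        (∀ v : M, J u + ((ζ u : ℝ) : EReal) ≤ J v + ((ζ v : ℝ) : EReal)) → u = ubar) :
    (∀ γ' : ℝ, γ' < γ → ∀ u ∈ EMetric.closedBall ubar (δ / 2),
        J ubar + ((γ' * dist u ubar : ℝ) : EReal) ≤ J u) ∧
    (∀ u ∈ EMetric.closedBall ubar (δ / 2),
        J ubar + ((γ * dist u ubar : ℝ) : EReal) ≤ J u) := by
  obtain ⟨c, hc⟩ := hbdd
  have growth : ∀ γ' : ℝ, γ' < γ → ∀ u ∈ EMetric.closedBall ubar (δ / 2),
      J ubar + ((γ' * dist u ubar : ℝ) : EReal) ≤ J u := by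
    intro γ' hγ' u hu
    rcases le_or_gt γ' 0 with hγ'0 | hγ'0
    · calc J ubar + ((γ' * dist u ubar : ℝ) : EReal) ≤ J ubar :=
            add_le_of_nonpos_right
              (EReal.coe_nonpos.2 (mul_nonpos_of_nonpos_of_nonneg hγ'0 dist_nonneg))
        _ ≤ J u := hmin u
    refine add_mul_dist_le_of_cone_stable hlsc hc hmin hγ'0 (fun v hv hv_min => ?_) hu
    refine hstab (fun w => γ' * dist w v) ‖γ'‖₊ ?_ ?_ v hv fun w => ?_
    · simpa [Function.comp_def] using (lipschitzWith_smul γ').comp (LipschitzWith.dist_left v)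
    · rwa [coe_nnnorm, Real.norm_of_nonneg hγ'0.le]
    · simpa [dist_comm] using hv_min w
  exact ⟨growth, fun u hu => EReal.add_coe_mul_le_of_forall_lt fun γ' hγ' => growth γ' hγ' u hu⟩

/-- in a complete metric space, stability of the minimizer under all
Lipschitz perturbations with constant < γ on a ball B(ū, δ) implies sharp local
minimality: linear growth with any modulus γ′ < γ, and hence with modulus γ, on
the ball B(ū, δ/2). -/
theorem lipschitz_stability_implies_sharp_local_min
    {M : Type*} [MetricSpace M] [CompleteSpace M]
    (J : M → EReal) (hbot : ∀ u, J u ≠ ⊥) (hproper : ∃ u, J u ≠ ⊤)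
    (hlsc : LowerSemicontinuous J) (hbdd : ∃ c : ℝ, ∀ u, ((c : ℝ) : EReal) ≤ J u)
    (ubar : M) (hmin : ∀ v : M, J ubar ≤ J v)
    (γ : ℝ) (hγ : 0 < γ) (δ : ENNReal) (hδ : 0 < δ)
    (hstab : ∀ (ζ : M → ℝ) (K : NNReal), LipschitzWith K ζ → (K : ℝ) < γ →
      ∀ u ∈ EMetric.closedBall ubar δ,
        (∀ v : M, J u + ((ζ u : ℝ) : EReal) ≤ J v + ((ζ v : ℝ) : EReal)) → u = ubar) :
    (∀ γ' : ℝ, γ' < γ → ∀ u ∈ EMetric.closedBall ubar (δ / 2),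
        J ubar + ((γ' * dist u ubar : ℝ) : EReal) ≤ J u) ∧
    (∀ u ∈ EMetric.closedBall ubar (δ / 2),
        J ubar + ((γ * dist u ubar : ℝ) : EReal) ≤ J u) :=
  lipschitz_stability_implies_sharp_local_min_general J hlsc hbdd ubar hmin γ δ hstab
end
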